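/- The function Ψ(x,y) = ( (y−1)/y − (1−x)(2x+1)/(2y) )·( 1 − ((y−1)/y)·((1+x)/2) ) − ( (1−x)(y−2) / (2y − (1−x)(2x+1)) )·(1 + 1/y) is nonnegative for all (x,y) ∈ [0,1] × [3,∞). -/

import Mathlib

/-- The function `Ψ(x,y)` from Lemma 3.4. -/
noncomputable def PsiFun (x y : ℝ) : ℝ :=
  ((y - 1) / y - (1 - x) * (2 * x + 1) / (2 * y)) * (1 - (y - 1) / y * ((1 + x) / 2)) -
    (1 - x) * (y - 2) / (2 * y - (1 - x) * (2 * x + 1)) * (1 + 1 / y)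

/-!
Over the common denominator `4 y² D`, with `D = 2y − (1 − x)(2x + 1) = 2y − 9/8 + 2(x − 1/4)²`,
the numerator of `Ψ` is a quadratic in `y − 3` whose three coefficients are polynomials in `x`
that are nonnegative on `[0, 1]`.
-/

namespace PsiFun

def denom (x y : ℝ) : ℝ := 2 * y - (1 - x) * (2 * x + 1)

-- The factors of the first product in `Ψ` are `(D - 2) / (2y)` and `(y (1 - x) + 1 + x) / (2y)`.
def numer (x y : ℝ) : ℝ :=
  denom x y * (denom x y - 2) * (y * (1 - x) + 1 + x) - 4 * y * (1 - x) * (y - 2) * (y + 1)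

variable {x y : ℝ}

theorem eq_numer_div_denom (hy : y ≠ 0) (hD : denom x y ≠ 0) :
    PsiFun x y = numer x y / (4 * y ^ 2 * denom x y) := by
  have hc : (1 - x) * (2 * x + 1) = 2 * y - denom x y := by unfold denom; ring
  rw [PsiFun, show 2 * y - (1 - x) * (2 * x + 1) = denom x y from rfl, numer, hc]
  field_simp
  ring

theorem denom_pos (hy : 9 / 16 < y) : 0 < denom x y := by
  have : denom x y = 2 * y - 9 / 8 + 2 * (x - 1 / 4) ^ 2 := by unfold denom; ring
  rw [this]
  exact add_pos_of_pos_of_nonneg (by linarith) (by positivity)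

theorem numer_eq_quadratic_in_sub_three (x y : ℝ) :
    numer x y = 4 * x * (1 + 3 * x - 2 * x ^ 2) * (y - 3) ^ 2
      + (3 + 5 * x + 65 * x ^ 2 - 37 * x ^ 3 + 8 * x ^ 4 - 4 * x ^ 5) * (y - 3)
      + (12 - 14 * x + 84 * x ^ 2 - 50 * x ^ 3 + 24 * x ^ 4 - 8 * x ^ 5) := by
  unfold numer denom
  ring

theorem numer_nonneg (hx₀ : 0 ≤ x) (hx₁ : x ≤ 1) (hy : 3 ≤ y) : 0 ≤ numer x y := by
  have hx₁' : 0 ≤ 1 - x := sub_nonneg.2 hx₁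
  have hquad : 0 ≤ 4 * x * (1 + 3 * x - 2 * x ^ 2) := by nlinarith
  have hlin : 0 ≤ 3 + 5 * x + 65 * x ^ 2 - 37 * x ^ 3 + 8 * x ^ 4 - 4 * x ^ 5 := by
    nlinarith [mul_nonneg (sq_nonneg x) hx₁', mul_nonneg (pow_nonneg hx₀ 4) hx₁']
  have hconst : 0 ≤ 12 - 14 * x + 84 * x ^ 2 - 50 * x ^ 3 + 24 * x ^ 4 - 8 * x ^ 5 := by
    nlinarith [mul_nonneg (sq_nonneg x) hx₁', mul_nonneg (pow_nonneg hx₀ 4) hx₁',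
      sq_nonneg (x - 7 / 34)]
  rw [numer_eq_quadratic_in_sub_three]
  have ht : 0 ≤ y - 3 := sub_nonneg.2 hy
  positivity

end PsiFun

theorem Psi_nonneg : ∀ x y : ℝ, x ∈ Set.Icc (0 : ℝ) 1 → y ∈ Set.Ici (3 : ℝ) →
    0 ≤ PsiFun x y := by
  rintro x y ⟨hx₀, hx₁⟩ (hy : 3 ≤ y)
  have hD := PsiFun.denom_pos (x := x) (by linarith : (9 / 16 : ℝ) < y)
  rw [PsiFun.eq_numer_div_denom (by positivity) hD.ne']
  have := PsiFun.numer_nonneg hx₀ hx₁ hy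
  positivity
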